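/- Let I ⊂ S = K[x_1,…,x_n] be a monomial ideal generated in degree two. Then the highest nonvanishing matching power I^{[ν(I)]} is a polymatroidal ideal. -/

import Mathlib

open MvPolynomial CategoryTheory

noncomputable section

namespace MatchingPowers

variable {K : Type} [Field K] {σ : Type*}

/-- The total degree of an exponent vector. -/
def degF (a : σ →₀ ℕ) : ℕ := a.sum fun _ e => e

/-- An ideal of a polynomial ring is a *monomial ideal* if it is generated by monomials. -/
def IsMonomialIdeal (I : Ideal (MvPolynomial σ K)) : Prop :=
  ∃ A : Set (σ →₀ ℕ), I = Ideal.span ((fun a => (monomial a (1 : K) : MvPolynomial σ K)) '' A)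

/-- The set of (exponent vectors of) minimal monomial generators of a monomial ideal `I`:
monomials of `I` such that no proper monomial divisor belongs to `I`. -/
def minGens (I : Ideal (MvPolynomial σ K)) : Set (σ →₀ ℕ) :=
  {a | (monomial a (1 : K) : MvPolynomial σ K) ∈ I ∧
    ∀ b : σ →₀ ℕ, (monomial b (1 : K) : MvPolynomial σ K) ∈ I → b ≤ a → b = a}

/-- The `k`-th matching power of a monomial ideal: the ideal generated by all products
`u₁ ⋯ u_k` of minimal monomial generators with pairwise disjoint supports. -/
def matchingPower (I : Ideal (MvPolynomial σ K)) (k : ℕ) : Ideal (MvPolynomial σ K) :=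
  Ideal.span {f | ∃ u : Fin k → (σ →₀ ℕ),
    (∀ i, u i ∈ minGens I) ∧
    (∀ i j, i ≠ j → Disjoint (u i).support (u j).support) ∧
    f = monomial (∑ i, u i) (1 : K)}

/-- The monomial grade `ν(I)`: the maximum size of a set of monomials of `I` with pairwise
disjoint supports. -/
def monomialGrade (I : Ideal (MvPolynomial σ K)) : ℕ :=
  sSup {k | ∃ u : Fin k → (σ →₀ ℕ), Function.Injective u ∧
    (∀ i, (monomial (u i) (1 : K) : MvPolynomial σ K) ∈ I) ∧
    ∀ i j, i ≠ j → Disjoint (u i).support (u j).support}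

/-- The initial degree of a monomial ideal: the least degree of a monomial belonging to it. -/
def indeg (I : Ideal (MvPolynomial σ K)) : ℕ :=
  sInf {d | ∃ a : σ →₀ ℕ, (monomial a (1 : K) : MvPolynomial σ K) ∈ I ∧ degF a = d}

/-- `deg_{x_i}(I)`: the maximum of the `x_i`-degrees of the minimal monomial generators. -/
def boundingDeg (I : Ideal (MvPolynomial σ K)) (i : σ) : ℕ :=
  sSup {e | ∃ a ∈ minGens I, a i = e}

/-- `|deg(I)|`: the sum of the entries of the bounding multidegree of `I`. -/
def totalBoundingDeg [Fintype σ] (I : Ideal (MvPolynomial σ K)) : ℕ :=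
  ∑ i, boundingDeg I i

/-- The maximal graded ideal `(x_i : i)` of the polynomial ring. -/
def varsIdeal (K : Type) [Field K] (σ : Type*) : Ideal (MvPolynomial σ K) :=
  Ideal.span (Set.range (X : σ → MvPolynomial σ K))

/-- The depth of `S/I`: the maximal length of a regular sequence on `S/I` consisting of
elements of the maximal graded ideal. -/
def depthQ (I : Ideal (MvPolynomial σ K)) : ℕ :=
  sSup {k | ∃ rs : List (MvPolynomial σ K), rs.length = k ∧
    (∀ r ∈ rs, r ∈ varsIdeal K σ) ∧
    RingTheory.Sequence.IsRegular (MvPolynomial σ K ⧸ I) rs}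

/-- The projective dimension of a module, defined through vanishing of `Ext`. -/
def pdim {R : Type} [CommRing R] (M : ModuleCat R) : ℕ∞ :=
  sInf {p : ℕ∞ | ∀ (N : ModuleCat R) (i : ℕ), p < (i : ℕ∞) →
    Subsingleton (((Ext R (ModuleCat R) i).obj (Opposite.op M)).obj N)}

/-- The projective dimension of an ideal, viewed as a module over the ring. -/
def pdimIdeal {R : Type} [CommRing R] (I : Ideal R) : ℕ∞ :=
  pdim (ModuleCat.of R I)

/-- The normalized depth function
`g_I(k) = depth(S/I^{[k]}) + |deg(I)| - n - (indeg(I^{[k]}) - 1)`. -/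
def gFun [Fintype σ] (I : Ideal (MvPolynomial σ K)) (k : ℕ) : ℤ :=
  (depthQ (matchingPower I k) : ℤ) + (totalBoundingDeg I : ℤ) - (Fintype.card σ : ℤ)
    - ((indeg (matchingPower I k) : ℤ) - 1)

/-- A monomial ideal is polymatroidal if it is generated in a single degree and the
exchange property holds for its minimal monomial generators: if `deg_{x_i} u > deg_{x_i} v`
then `x_j · u / x_i` is a minimal generator for some `j` with `deg_{x_j} u < deg_{x_j} v`. -/
def IsPolymatroidal (I : Ideal (MvPolynomial σ K)) : Prop :=
  (∃ d, ∀ a ∈ minGens I, degF a = d) ∧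
  ∀ a ∈ minGens I, ∀ b ∈ minGens I, ∀ i : σ, b i < a i →
    ∃ j : σ, a j < b j ∧ a + Finsupp.single j 1 - Finsupp.single i 1 ∈ minGens I

/-!
The minimal generators `x_u x_w` and `x_u²` of `I` are the edges and loops of a graph; a product of
pairwise support-disjoint generators is a matching of it, so the minimal generators of
`I^{[ν(I)]}` are the products `∏ M` over the maximum matchings `M`, all of degree `2ν(I)`.
The exchange property is an alternating-path argument. If `deg_{x_i} ∏ M > deg_{x_i} ∏ N` for
maximum matchings `M`, `N`, let `e = x_i x_u ∈ M`; maximality of `N` forces an edge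
`f = x_u x_w ∈ N` meeting `e`, so that `f x_i = e x_w`. If `x_w` does not divide `∏ (M ∖ e)`,
then `(M ∖ e) ∪ f` is the exchange with `j = w`. Otherwise one recurses at the vertex `w` on
`M ∖ e` and `N ∖ f`, the latter a maximum matching among the edges disjoint from `e`, and adds `f`
back. This works because `x_w` divides `∏ (M ∖ e)` only once: a loop `x_w²` there, together with
`e`, would enlarge `N ∖ f` beyond `|N|`.
-/

lemma degF_eq_degree (a : σ →₀ ℕ) : degF a = a.degree := rfl

lemma ne_zero_of_degF_eq {a : σ →₀ ℕ} {d : ℕ} (ha : degF a = d) (hd : d ≠ 0) : a ≠ 0 := by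
  rintro rfl
  exact hd ha.symm

lemma eq_of_le_of_degF_eq {a b : σ →₀ ℕ} (hab : a ≤ b) (h : degF a = degF b) : a = b :=
  hab.eq_of_not_lt fun hlt => (Finsupp.sum_id_lt_of_lt a b hlt).ne h

lemma exists_eq_single_add_single {g : σ →₀ ℕ} (hg : degF g = 2) {u : σ} (hu : g u ≠ 0) :
    ∃ w, g = Finsupp.single u 1 + Finsupp.single w 1 := by
  have hle : Finsupp.single u 1 ≤ g := Finsupp.single_le_iff.2 (Nat.one_le_iff_ne_zero.2 hu)
  have hdeg : (g - Finsupp.single u 1).degree = 1 := by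
    have := congrArg Finsupp.degree (tsub_add_cancel_of_le hle)
    rw [map_add, Finsupp.degree_single, ← degF_eq_degree g, hg] at this
    omega
  obtain ⟨w, hw⟩ : g - Finsupp.single u 1 ∈ Set.range (Finsupp.single · 1) := by
    rwa [Finsupp.range_single_one]
  exact ⟨w, (add_tsub_cancel_of_le hle).symm.trans (congrArg _ hw.symm)⟩

lemma disjoint_support_single_add_single_iff {u w : σ} {g : σ →₀ ℕ} :
    Disjoint (Finsupp.single u 1 + Finsupp.single w 1).support g.support ↔ g u = 0 ∧ g w = 0 := by
  classical
  simp only [Finset.disjoint_left, Finsupp.mem_support_iff, Finsupp.add_apply,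
    Finsupp.single_apply, ne_eq, not_not]
  grind

lemma eq_zero_of_disjoint_support_self {M : Type*} [Zero M] {g : σ →₀ M}
    (h : Disjoint g.support g.support) : g = 0 :=
  Finsupp.support_eq_empty.1 (disjoint_self.1 h)

def IsMatching (M : Finset (σ →₀ ℕ)) : Prop :=
  (M : Set (σ →₀ ℕ)).PairwiseDisjoint Finsupp.support

def matchingSums (G : Set (σ →₀ ℕ)) (k : ℕ) : Set (σ →₀ ℕ) :=
  {a | ∃ M : Finset (σ →₀ ℕ), ↑M ⊆ G ∧ IsMatching M ∧ M.card = k ∧ ∑ g ∈ M, g = a}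

lemma degF_of_mem_matchingSums {G : Set (σ →₀ ℕ)} {d k : ℕ} (hG : ∀ g ∈ G, degF g = d)
    {a : σ →₀ ℕ} (ha : a ∈ matchingSums G k) : degF a = k * d := by
  obtain ⟨M, hMG, -, rfl, rfl⟩ := ha
  rw [degF_eq_degree, map_sum]
  exact Finset.sum_const_nat fun g hg => hG g (hMG hg)

lemma apply_eq_zero_of_isMatching {M : Finset (σ →₀ ℕ)} (hM : IsMatching M) {e g : σ →₀ ℕ}
    (he : e ∈ M) (hg : g ∈ M) (hne : g ≠ e) {v : σ} (hv : e v ≠ 0) : g v = 0 :=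
  Finsupp.notMem_support_iff.1 fun hgv =>
    Finset.disjoint_left.1 (hM hg he hne) hgv (Finsupp.mem_support_iff.2 hv)

lemma sum_apply_of_isMatching {M : Finset (σ →₀ ℕ)} (hM : IsMatching M) {e : σ →₀ ℕ}
    (he : e ∈ M) {v : σ} (hv : e v ≠ 0) : (∑ g ∈ M, g) v = e v := by
  rw [Finsupp.finsetSum_apply, Finset.sum_eq_single_of_mem e he
    fun g hg hne => apply_eq_zero_of_isMatching hM he hg hne hv]

lemma sum_apply_eq_zero_iff {M : Finset (σ →₀ ℕ)} {v : σ} :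
    (∑ g ∈ M, g) v = 0 ↔ ∀ g ∈ M, g v = 0 := by
  rw [Finsupp.finsetSum_apply, Finset.sum_eq_zero_iff]

lemma exists_mem_apply_ne_zero {M : Finset (σ →₀ ℕ)} {v : σ} (h : (∑ g ∈ M, g) v ≠ 0) :
    ∃ g ∈ M, g v ≠ 0 := by
  simpa [sum_apply_eq_zero_iff] using h

def IsMaximumMatching (G : Set (σ →₀ ℕ)) (N : Finset (σ →₀ ℕ)) : Prop :=
  ↑N ⊆ G ∧ IsMatching N ∧ ∀ S : Finset (σ →₀ ℕ), ↑S ⊆ G → IsMatching S → S.card ≤ N.card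

lemma IsMaximumMatching.card_lt_of_forall_disjoint {G : Set (σ →₀ ℕ)} {N : Finset (σ →₀ ℕ)}
    (hN : IsMaximumMatching G N) {e : σ →₀ ℕ} (heG : e ∈ G) (he : e ≠ 0)
    {S : Finset (σ →₀ ℕ)} (hSG : ↑S ⊆ G) (hS : IsMatching S)
    (hdisj : ∀ g ∈ S, Disjoint e.support g.support) : S.card < N.card := by
  classical
  have heS : e ∉ S := fun h => he (eq_zero_of_disjoint_support_self (hdisj e h))
  have := hN.2.2 (insert e S) (by simpa [Set.insert_subset_iff] using ⟨heG, hSG⟩)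
    (by rw [IsMatching, Finset.coe_insert]; exact hS.insert fun g hg _ => hdisj g hg)
  rwa [Finset.card_insert_of_notMem heS, Nat.add_one_le_iff] at this

lemma IsMaximumMatching.sum_apply_le_one {G : Set (σ →₀ ℕ)} (hG : ∀ g ∈ G, degF g = 2)
    {N : Finset (σ →₀ ℕ)} (hN : IsMaximumMatching G N) {w : σ} (hNw : ∀ g ∈ N, g w = 0)
    {M : Finset (σ →₀ ℕ)} (hMG : ↑M ⊆ G) (hM : IsMatching M) : (∑ g ∈ M, g) w ≤ 1 := by
  classical
  by_contra! hMw
  obtain ⟨g, hgM, hgw⟩ := exists_mem_apply_ne_zero (M := M) (v := w) (by omega)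
  rw [sum_apply_of_isMatching hM hgM hgw] at hMw
  obtain ⟨t, rfl⟩ := exists_eq_single_add_single (hG g (hMG hgM)) hgw
  obtain rfl : t = w := by by_contra htw; simp [Ne.symm htw] at hMw
  refine (hN.card_lt_of_forall_disjoint (hMG hgM) (ne_zero_of_degF_eq (hG _ (hMG hgM))
    two_ne_zero) hN.1 hN.2.1 fun g' hg' => ?_).false
  exact disjoint_support_single_add_single_iff.2 ⟨hNw g' hg', hNw g' hg'⟩

section

variable [DecidableEq σ]

lemma IsMaximumMatching.erase {G : Set (σ →₀ ℕ)} {N : Finset (σ →₀ ℕ)}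
    (hN : IsMaximumMatching G N) {e f : σ →₀ ℕ} (heG : e ∈ G) (he : e ≠ 0) (hfN : f ∈ N)
    (hdisj : ∀ g ∈ N.erase f, Disjoint e.support g.support) :
    IsMaximumMatching {g ∈ G | Disjoint e.support g.support} (N.erase f) := by
  refine ⟨fun g hg => ⟨hN.1 (Finset.mem_of_mem_erase hg), hdisj g hg⟩,
    Set.PairwiseDisjoint.subset hN.2.1 (by simp), fun S hSG hS => ?_⟩
  have := hN.card_lt_of_forall_disjoint heG he (hSG.trans (Set.sep_subset _ _)) hS
    fun _ hg => (hSG hg).2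
  rw [Finset.card_erase_of_mem hfN]
  omega

lemma IsMaximumMatching.exists_partner {G : Set (σ →₀ ℕ)} (hG : ∀ g ∈ G, degF g = 2)
    {N : Finset (σ →₀ ℕ)} (hN : IsMaximumMatching G N) {M : Finset (σ →₀ ℕ)} (hMG : ↑M ⊆ G)
    (hM : IsMatching M) {i : σ} (hi : (∑ g ∈ N, g) i < (∑ g ∈ M, g) i) :
    ∃ e ∈ M, ∃ f ∈ N, ∃ u w : σ, e = Finsupp.single i 1 + Finsupp.single u 1 ∧
      f = Finsupp.single u 1 + Finsupp.single w 1 ∧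
      ∀ g ∈ N.erase f, Disjoint e.support g.support := by
  obtain ⟨e, heM, hei⟩ := exists_mem_apply_ne_zero (M := M) (v := i) (by omega)
  have hlt := hi.trans_eq (sum_apply_of_isMatching hM heM hei)
  obtain ⟨u, rfl⟩ := exists_eq_single_add_single (hG _ (hMG heM)) hei
  have hNi : ∀ g ∈ N, g u = 0 → g i = 0 := fun g hg hgu => by
    rcases eq_or_ne u i with rfl | h
    · exact hgu
    · have hei : (Finsupp.single i 1 + Finsupp.single u 1 : σ →₀ ℕ) i = 1 := by simp [h]
      exact sum_apply_eq_zero_iff.1 (by omega) g hg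
  by_cases hNu : (∑ g ∈ N, g) u = 0
  · refine absurd (hN.card_lt_of_forall_disjoint (hMG heM)
      (ne_zero_of_degF_eq (hG _ (hMG heM)) two_ne_zero) hN.1 hN.2.1 fun g hg => ?_) (lt_irrefl _)
    have hgu := sum_apply_eq_zero_iff.1 hNu g hg
    exact disjoint_support_single_add_single_iff.2 ⟨hNi g hg hgu, hgu⟩
  · obtain ⟨f, hfN, hfu⟩ := exists_mem_apply_ne_zero hNu
    obtain ⟨w, rfl⟩ := exists_eq_single_add_single (hG f (hN.1 hfN)) hfu
    refine ⟨_, heM, _, hfN, u, w, rfl, rfl, fun g hg => ?_⟩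
    have hgu := apply_eq_zero_of_isMatching hN.2.1 hfN (Finset.mem_of_mem_erase hg)
      (Finset.ne_of_mem_erase hg) hfu
    exact disjoint_support_single_add_single_iff.2 ⟨hNi g (Finset.mem_of_mem_erase hg) hgu, hgu⟩

lemma sum_apply_lt_of_sum_erase_apply_eq_zero {M N : Finset (σ →₀ ℕ)} (hN : IsMatching N)
    {e f : σ →₀ ℕ} (heM : e ∈ M) (hfN : f ∈ N) {i w : σ} (hi : (∑ g ∈ N, g) i < (∑ g ∈ M, g) i)
    (hfw : f w ≠ 0) (hkey : f + Finsupp.single i 1 = e + Finsupp.single w 1)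
    (hw : (∑ g ∈ M.erase e, g) w = 0) :
    (∑ g ∈ M, g) w < (∑ g ∈ N, g) w := by
  have hMw : (∑ g ∈ M, g) w = e w := by
    rw [← Finset.add_sum_erase M (fun g => g) heM, Finsupp.add_apply, hw, add_zero]
  have hNw : (∑ g ∈ N, g) w = f w := sum_apply_of_isMatching hN hfN hfw
  have hwi : w ≠ i := by
    rintro rfl
    rw [add_right_cancel hkey] at hNw
    omega
  have hkw := DFunLike.congr_fun hkey w
  simp only [Finsupp.add_apply, Finsupp.single_eq_same, Finsupp.single_eq_of_ne hwi] at hkw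
  omega

lemma sum_apply_lt_of_sum_erase_apply_lt {M N : Finset (σ →₀ ℕ)} (hN : IsMatching N)
    {e f : σ →₀ ℕ} (heM : e ∈ M) (hfN : f ∈ N)
    (hdisj : ∀ g ∈ N.erase f, Disjoint e.support g.support) {j : σ}
    (hj : (∑ g ∈ M.erase e, g) j < (∑ g ∈ N.erase f, g) j) :
    (∑ g ∈ M, g) j < (∑ g ∈ N, g) j := by
  obtain ⟨g, hgN, hgj⟩ := exists_mem_apply_ne_zero (M := N.erase f) (v := j) (by omega)
  have hej : e j = 0 := Finsupp.notMem_support_iff.1 fun h =>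
    Finset.disjoint_left.1 (hdisj g hgN) h (Finsupp.mem_support_iff.2 hgj)
  have hfj : f j = 0 := apply_eq_zero_of_isMatching hN (Finset.mem_of_mem_erase hgN) hfN
    (Finset.ne_of_mem_erase hgN).symm hgj
  rw [← Finset.add_sum_erase M (fun g => g) heM, ← Finset.add_sum_erase N (fun g => g) hfN,
    Finsupp.add_apply, Finsupp.add_apply]
  omega

lemma exists_exchange_of_insert {G : Set (σ →₀ ℕ)} {M M'' : Finset (σ →₀ ℕ)} {e : σ →₀ ℕ}
    {i u w j : σ} (heM : e ∈ M) (hfG : Finsupp.single u 1 + Finsupp.single w 1 ∈ G)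
    (hM''G : ↑M'' ⊆ G) (hM'' : IsMatching M'') (hcard : M''.card + 1 = M.card)
    (hM''u : ∀ g ∈ M'', g u = 0) (hM''w : (∑ g ∈ M'', g) w = 0)
    (hkey : Finsupp.single u 1 + Finsupp.single w 1 + Finsupp.single i 1 = e + Finsupp.single w 1)
    (hsum : (∑ g ∈ M'', g) + Finsupp.single w 1 = (∑ g ∈ M.erase e, g) + Finsupp.single j 1) :
    ∃ M' : Finset (σ →₀ ℕ), ↑M' ⊆ G ∧ IsMatching M' ∧ M'.card = M.card ∧
      (∑ g ∈ M', g) + Finsupp.single i 1 = (∑ g ∈ M, g) + Finsupp.single j 1 := by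
  set f := Finsupp.single u 1 + Finsupp.single w 1
  have hdisj : ∀ g ∈ M'', Disjoint f.support g.support := fun g hg =>
    disjoint_support_single_add_single_iff.2 ⟨hM''u g hg, sum_apply_eq_zero_iff.1 hM''w g hg⟩
  have hfM'' : f ∉ M'' := fun h => by simpa [f] using hM''u f h
  refine ⟨insert f M'', by simpa [Set.insert_subset_iff] using ⟨hfG, hM''G⟩,
    by rw [IsMatching, Finset.coe_insert]; exact hM''.insert fun g hg _ => hdisj g hg,
    by rw [Finset.card_insert_of_notMem hfM'', hcard], ?_⟩
  rw [Finset.sum_insert hfM'', ← Finset.add_sum_erase M (fun g => g) heM]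
  calc f + ∑ g ∈ M'', g + Finsupp.single i 1
      = (f + Finsupp.single i 1) + ∑ g ∈ M'', g := by abel
    _ = e + ((∑ g ∈ M'', g) + Finsupp.single w 1) := by rw [hkey]; abel
    _ = e + ∑ g ∈ M.erase e, g + Finsupp.single j 1 := by rw [hsum]; abel

end

theorem IsMaximumMatching.exists_exchange {G : Set (σ →₀ ℕ)} (hG : ∀ g ∈ G, degF g = 2)
    {N : Finset (σ →₀ ℕ)} (hN : IsMaximumMatching G N) {M : Finset (σ →₀ ℕ)} (hMG : ↑M ⊆ G)
    (hM : IsMatching M) {i : σ} (hi : (∑ g ∈ N, g) i < (∑ g ∈ M, g) i) :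
    ∃ j, (∑ g ∈ M, g) j < (∑ g ∈ N, g) j ∧ ∃ M' : Finset (σ →₀ ℕ), ↑M' ⊆ G ∧ IsMatching M' ∧
      M'.card = M.card ∧
      (∑ g ∈ M', g) + Finsupp.single i 1 = (∑ g ∈ M, g) + Finsupp.single j 1 := by
  classical
  obtain ⟨k, hk⟩ : ∃ k, N.card = k := ⟨_, rfl⟩
  induction k generalizing G M N i with
  | zero =>
    obtain rfl := Finset.card_eq_zero.1 (Nat.le_zero.1 (hk ▸ hN.2.2 M hMG hM))
    simp at hi
  | succ k ih =>
  obtain ⟨e, heM, f, hfN, u, w, he, hf, hN₁e⟩ := hN.exists_partner hG hMG hM hi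
  have heG := hMG heM
  have hfG : Finsupp.single u 1 + Finsupp.single w 1 ∈ G := hf ▸ hN.1 hfN
  have hfw : f w ≠ 0 := by simp [hf]
  have hkey : f + Finsupp.single i 1 = e + Finsupp.single w 1 := by rw [he, hf]; abel
  have hM₁ : IsMatching (M.erase e) := Set.PairwiseDisjoint.subset hM (by simp)
  have hM₁e : ∀ g ∈ M.erase e, Disjoint e.support g.support := fun g hg =>
    hM heM (Finset.mem_of_mem_erase hg) (Finset.ne_of_mem_erase hg).symm
  have hu : ∀ g : σ →₀ ℕ, Disjoint e.support g.support → g u = 0 := fun g hg =>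
    (disjoint_support_single_add_single_iff.1 (he ▸ hg)).2
  by_cases hw : (∑ g ∈ M.erase e, g) w = 0
  · exact ⟨w, sum_apply_lt_of_sum_erase_apply_eq_zero hN.2.1 heM hfN hi hfw hkey hw,
      exists_exchange_of_insert heM hfG (fun g hg => hMG (Finset.mem_of_mem_erase hg)) hM₁
        (Finset.card_erase_add_one heM) (fun g hg => hu g (hM₁e g hg)) hw (hf ▸ hkey) rfl⟩
  have hN₁ := hN.erase heG (ne_zero_of_degF_eq (hG e heG) two_ne_zero) hfN hN₁e
  have hM₁G : ↑(M.erase e) ⊆ {g ∈ G | Disjoint e.support g.support} := fun g hg =>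
    ⟨hMG (Finset.mem_of_mem_erase hg), hM₁e g hg⟩
  have hN₁w : (∑ g ∈ N.erase f, g) w = 0 := sum_apply_eq_zero_iff.2 fun g hg =>
    apply_eq_zero_of_isMatching hN.2.1 hfN (Finset.mem_of_mem_erase hg)
      (Finset.ne_of_mem_erase hg) hfw
  obtain ⟨j, hj, M'', hM''G, hM'', hM''k, hsum⟩ := ih (fun g hg => hG g hg.1) hN₁ hM₁G hM₁
    (i := w) (by omega) (by rw [Finset.card_erase_of_mem hfN, hk]; rfl)
  have hM''w : (∑ g ∈ M'', g) w = 0 := by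
    have hjw : j ≠ w := by rintro rfl; omega
    have hM₁w := hN₁.sum_apply_le_one (fun g hg => hG g hg.1) (sum_apply_eq_zero_iff.1 hN₁w)
      hM₁G hM₁
    have := DFunLike.congr_fun hsum w
    simp only [Finsupp.add_apply, Finsupp.single_eq_same, Finsupp.single_eq_of_ne hjw.symm] at this
    omega
  exact ⟨j, sum_apply_lt_of_sum_erase_apply_lt hN.2.1 heM hfN hN₁e hj,
    exists_exchange_of_insert heM hfG (fun g hg => (hM''G hg).1) hM''
      (by rw [hM''k]; exact Finset.card_erase_add_one heM) (fun g hg => hu g (hM''G hg).2) hM''w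
      (hf ▸ hkey) hsum⟩

lemma monomial_mem_span_monomial_image_iff {A : Set (σ →₀ ℕ)} {a : σ →₀ ℕ} :
    (monomial a (1 : K) : MvPolynomial σ K) ∈
        Ideal.span ((fun b => (monomial b (1 : K) : MvPolynomial σ K)) '' A) ↔
      ∃ b ∈ A, b ≤ a := by
  classical
  rw [mem_ideal_span_monomial_image, support_monomial, if_neg one_ne_zero]
  simp

lemma minGens_span_monomial_image {A : Set (σ →₀ ℕ)} {d : ℕ} (hA : ∀ a ∈ A, degF a = d) :
    minGens (Ideal.span ((fun b => (monomial b (1 : K) : MvPolynomial σ K)) '' A)) = A := by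
  ext a
  simp only [minGens, Set.mem_ofPred_eq, monomial_mem_span_monomial_image_iff]
  constructor
  · rintro ⟨⟨b, hb, hba⟩, hmin⟩
    rwa [← hmin b ⟨b, hb, le_rfl⟩ hba]
  · intro ha
    refine ⟨⟨a, ha, le_rfl⟩, fun b ⟨c, hc, hcb⟩ hba => le_antisymm hba ?_⟩
    rw [← eq_of_le_of_degF_eq (hcb.trans hba) (by rw [hA c hc, hA a ha])]
    exact hcb

lemma card_le_of_pairwise_disjoint_support [Fintype σ] {M : Type*} [Zero M] {k : ℕ}
    {u : Fin k → σ →₀ M} (hu : Function.Injective u)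
    (hd : ∀ i j, i ≠ j → Disjoint (u i).support (u j).support) : k ≤ Fintype.card σ + 1 := by
  classical
  have hinj : Function.Injective fun i => (u i).support := fun i j hij => by
    by_contra hne
    have hdisj := hd i j hne
    simp only at hij
    rw [hij] at hdisj
    have hj := eq_zero_of_disjoint_support_self hdisj
    have hi : u i = 0 := Finsupp.support_eq_empty.1 (hij.trans (Finsupp.support_eq_empty.2 hj))
    exact hne (hu (hi.trans hj.symm))
  have := Finset.card_le_card_biUnion_add_one hinj (s := Finset.univ) fun i _ j _ => hd i j
  simpa using this.trans (Nat.add_le_add_right (Finset.card_le_univ _) 1)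

lemma IsMatching.exists_fin_enum {S : Finset (σ →₀ ℕ)} (hS : IsMatching S) :
    ∃ u : Fin S.card → σ →₀ ℕ, Function.Injective u ∧ (∀ i, u i ∈ S) ∧
      (∀ i j, i ≠ j → Disjoint (u i).support (u j).support) ∧ ∑ i, u i = ∑ g ∈ S, g := by
  have hu : Function.Injective fun i => (S.equivFin.symm i : σ →₀ ℕ) :=
    Subtype.val_injective.comp S.equivFin.symm.injective
  refine ⟨_, hu, fun i => (S.equivFin.symm i).2,
    fun i j hij => hS (S.equivFin.symm i).2 (S.equivFin.symm j).2 (hu.ne hij), ?_⟩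
  rw [Equiv.sum_comp S.equivFin.symm (fun g : S => (g : σ →₀ ℕ))]
  exact Finset.sum_coe_sort S fun g => g

lemma card_le_monomialGrade [Fintype σ] {I : Ideal (MvPolynomial σ K)} {S : Finset (σ →₀ ℕ)}
    (hSI : ∀ g ∈ S, (monomial g (1 : K) : MvPolynomial σ K) ∈ I) (hS : IsMatching S) :
    S.card ≤ monomialGrade I := by
  obtain ⟨u, hu, huS, hd, -⟩ := hS.exists_fin_enum
  exact le_csSup ⟨Fintype.card σ + 1, fun k ⟨u, hu, _, hd⟩ =>
    card_le_of_pairwise_disjoint_support hu hd⟩ ⟨u, hu, fun i => hSI _ (huS i), hd⟩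

lemma matchingPower_eq_span {I : Ideal (MvPolynomial σ K)} (h0 : (0 : σ →₀ ℕ) ∉ minGens I)
    (k : ℕ) : matchingPower I k =
      Ideal.span ((fun a => (monomial a (1 : K) : MvPolynomial σ K)) ''
        matchingSums (minGens I) k) := by
  classical
  rw [matchingPower]
  congr 1
  ext p
  constructor
  · rintro ⟨u, hu, hd, rfl⟩
    have hinj : Function.Injective u := fun i j hij => by
      by_contra hne
      exact h0 (eq_zero_of_disjoint_support_self (hij ▸ hd i j hne) ▸ hu j)
    refine ⟨_, ⟨Finset.univ.map ⟨u, hinj⟩, ?_, ?_, by simp, by simp⟩, rfl⟩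
    · simpa [Set.range_subset_iff] using hu
    · rintro _ hg _ hg' hne
      simp only [Finset.coe_map, Set.mem_image, Finset.mem_coe] at hg hg'
      obtain ⟨i, -, rfl⟩ := hg
      obtain ⟨j, -, rfl⟩ := hg'
      exact hd i j fun h => hne (h ▸ rfl)
  · rintro ⟨_, ⟨M, hMG, hM, rfl, rfl⟩, rfl⟩
    obtain ⟨u, -, huM, hd, hsum⟩ := hM.exists_fin_enum
    exact ⟨u, fun i => hMG (huM i), hd, by rw [hsum]⟩

lemma minGens_matchingPower {I : Ideal (MvPolynomial σ K)} {d : ℕ} (hd : d ≠ 0)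
    (hI : ∀ a ∈ minGens I, degF a = d) (k : ℕ) :
    minGens (matchingPower I k) = matchingSums (minGens I) k := by
  rw [matchingPower_eq_span (fun h => ne_zero_of_degF_eq (hI 0 h) hd rfl) k]
  exact minGens_span_monomial_image fun a ha => degF_of_mem_matchingSums hI ha

theorem isPolymatroidal_top_matchingPower_general (n : ℕ) (K : Type) [Field K]
    (I : Ideal (MvPolynomial (Fin n) K))
    (hdeg2 : ∀ a ∈ minGens I, degF a = 2) :
    IsPolymatroidal (matchingPower I (monomialGrade I)) := by
  rw [IsPolymatroidal, minGens_matchingPower two_ne_zero hdeg2]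
  refine ⟨⟨_, fun a ha => degF_of_mem_matchingSums hdeg2 ha⟩, ?_⟩
  rintro _ ⟨M, hMG, hM, hMk, rfl⟩ _ ⟨N, hNG, hN, hNk, rfl⟩ i hi
  have hNmax : IsMaximumMatching (minGens I) N :=
    ⟨hNG, hN, fun S hSG hS => hNk ▸ card_le_monomialGrade (fun g hg => (hSG hg).1) hS⟩
  obtain ⟨j, hj, M', hM'G, hM', hM'k, hsum⟩ := hNmax.exists_exchange hdeg2 hMG hM hi
  exact ⟨j, hj, M', hM'G, hM', hM'k.trans hMk, by rw [← hsum, add_tsub_cancel_right]⟩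

/-- For a monomial ideal `I` generated in degree two, the highest
nonvanishing matching power `I^{[ν(I)]}` is polymatroidal. -/
theorem isPolymatroidal_top_matchingPower (n : ℕ) (K : Type) [Field K]
    (I : Ideal (MvPolynomial (Fin n) K)) (hI : IsMonomialIdeal I) (hne : I ≠ ⊥)
    (hdeg2 : ∀ a ∈ minGens I, degF a = 2) :
    IsPolymatroidal (matchingPower I (monomialGrade I)) :=
  isPolymatroidal_top_matchingPower_general n K I hdeg2

end MatchingPowers
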